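/- Let M ≥ 1, let a_i > 0 and b_i > 0 for i = 1,…,M, set c_i = (1 + e^{a_i b_i})/e^{a_i b_i}, d_i = 1/(1 + e^{a_i b_i}) and U_i(P) = c_i·(1/(1 + e^{-a_i(P-b_i)}) − d_i), let P_T > 0, and let F = { P ∈ ℝ^M : P_i > 0 for all i and Σ P_i ≤ P_T }. For each i let S_i(P) denote the derivative of P ↦ log U_i(P) at P. Suppose P* satisfies P*_i > 0 for all i and Σ_{i=1}^M P*_i = P_T. Then P* maximizes Σ_{i=1}^M log U_i(P_i) over F if and only if there exists a real number p (the shadow price) such that S_i(P*_i) = p for every i = 1,…,M. -/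

import Mathlib

/-!
With `E = exp (a b)`, the utility is `U(P) = (exp (a P) - 1) / (exp (a P) + E)`, whose
log-slope `a / (exp (a P) - 1) + a E / (exp (a P) + E)` is positive and decreasing for
`P > 0`; hence every `log U_i` is concave there.

If `P*` is a maximizer, shifting power from user `j` to user `i` keeps the total fixed, so
the first-order condition along `e_i - e_j` gives `S_i(P*_i) = S_j(P*_j)`. Conversely, if
all slopes equal `p > 0`, the tangent lines `log U_i(Q_i) ≤ log U_i(P*_i) + p (Q_i - P*_i)`
sum to `∑ log U_i(Q_i) ≤ ∑ log U_i(P*_i) + p (∑ Q_i - P_T) ≤ ∑ log U_i(P*_i)`.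
-/

open Real Finset

lemma ConcaveOn.le_add_mul_sub_of_hasDerivAt {S : Set ℝ} {f : ℝ → ℝ} {x y f' : ℝ}
    (hf : ConcaveOn ℝ S f) (hx : x ∈ S) (hy : y ∈ S) (hf' : HasDerivAt f f' x) :
    f y ≤ f x + f' * (y - x) := by
  rcases lt_trichotomy x y with hxy | rfl | hyx
  · have h := hf.slope_le_of_hasDerivAt hx hy hxy hf'
    rw [slope_def_field, div_le_iff₀ (sub_pos.2 hxy)] at h
    linarith
  · simp
  · have h := hf.le_slope_of_hasDerivAt hy hx hyx hf'
    rw [slope_def_field, le_div_iff₀ (sub_pos.2 hyx)] at h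
    linarith

lemma Finset.sum_le_sum_of_le_add_mul_sub {ι : Type*} (s : Finset ι) {f : ι → ℝ → ℝ}
    {x y : ι → ℝ} {p : ℝ} (hp : 0 ≤ p) (hf : ∀ i ∈ s, f i (y i) ≤ f i (x i) + p * (y i - x i))
    (hyx : ∑ i ∈ s, y i ≤ ∑ i ∈ s, x i) :
    ∑ i ∈ s, f i (y i) ≤ ∑ i ∈ s, f i (x i) :=
  calc ∑ i ∈ s, f i (y i) ≤ ∑ i ∈ s, (f i (x i) + p * (y i - x i)) := sum_le_sum hf
    _ = ∑ i ∈ s, f i (x i) + p * (∑ i ∈ s, y i - ∑ i ∈ s, x i) := by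
      rw [sum_add_distrib, ← mul_sum, sum_sub_distrib]
    _ ≤ ∑ i ∈ s, f i (x i) := by
      have := mul_nonpos_of_nonneg_of_nonpos hp (sub_nonpos.2 hyx)
      linarith

lemma eq_of_isMaxOn_sum_of_hasDerivAt {ι : Type*} [Fintype ι] [DecidableEq ι]
    {f : ι → ℝ → ℝ} {f' x : ι → ℝ} (hf : ∀ i, HasDerivAt (f i) (f' i) (x i))
    (hx : ∀ i, 0 < x i)
    (hmax : IsMaxOn (fun y => ∑ i, f i (y i)) {y | (∀ i, 0 < y i) ∧ ∑ i, y i ≤ ∑ i, x i} x)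
    (i j : ι) :
    f' i = f' j := by
  set v : ι → ℝ := Pi.single i 1 - Pi.single j 1
  have hv : ∑ k, v k = 0 := by simp [v, sum_sub_distrib]
  have hderiv : HasDerivAt (fun t => ∑ k, f k (x k + t * v k)) (∑ k, f' k * v k) 0 := by
    exact HasDerivAt.fun_sum fun k _ =>
      (hf k).comp_of_eq 0 ((hasDerivAt_mul_const (v k)).const_add (x k)) (by simp)
  have hmax_line : IsLocalMax (fun t => ∑ k, f k (x k + t * v k)) 0 := by
    have hpos : ∀ᶠ t in nhds (0:ℝ), ∀ k, 0 < x k + t * v k := by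
      refine Filter.eventually_all.2 fun k => ?_
      exact continuousAt_const.eventually_lt (by fun_prop) (by simpa using hx k)
    filter_upwards [hpos] with t ht
    simpa using isMaxOn_iff.1 hmax _ ⟨ht, by simp [sum_add_distrib, ← mul_sum, hv]⟩
  have := hmax_line.hasDerivAt_eq_zero hderiv
  simpa [v, mul_sub, sum_sub_distrib, Pi.single_apply, sub_eq_zero] using this

noncomputable def sigmoidUtility (a b P : ℝ) : ℝ :=
  (exp (a * P) - 1) / (exp (a * P) + exp (a * b))

noncomputable def sigmoidLogSlope (a b P : ℝ) : ℝ :=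
  a / (exp (a * P) - 1) + a * exp (a * b) / (exp (a * P) + exp (a * b))

lemma sigmoidUtility_eq (a b P : ℝ) :
    (1 + exp (a * b)) / exp (a * b) * (1 / (1 + exp (-a * (P - b))) - 1 / (1 + exp (a * b))) =
      sigmoidUtility a b P := by
  rw [show -a * (P - b) = a * b - a * P by ring, exp_sub, sigmoidUtility]
  field_simp
  ring

section

variable {a b P : ℝ}

lemma one_lt_exp_mul (ha : 0 < a) (hP : 0 < P) : 1 < exp (a * P) :=
  one_lt_exp_iff.2 (mul_pos ha hP)

lemma sigmoidUtility_pos (ha : 0 < a) (hP : 0 < P) : 0 < sigmoidUtility a b P :=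
  div_pos (sub_pos.2 (one_lt_exp_mul ha hP)) (by positivity)

lemma sigmoidLogSlope_pos (ha : 0 < a) (hP : 0 < P) : 0 < sigmoidLogSlope a b P :=
  add_pos (div_pos ha (sub_pos.2 (one_lt_exp_mul ha hP))) (by positivity)

lemma hasDerivAt_log_sigmoidUtility (ha : 0 < a) (hP : 0 < P) :
    HasDerivAt (fun P => log (sigmoidUtility a b P)) (sigmoidLogSlope a b P) P := by
  have hexp : HasDerivAt (fun P => exp (a * P)) (exp (a * P) * a) P := by
    simpa using ((hasDerivAt_id P).const_mul a).exp
  refine (((hexp.sub_const 1).fun_div (hexp.add_const (exp (a * b))) (by positivity)).log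
    (sigmoidUtility_pos ha hP).ne').congr_deriv ?_
  have := (sub_pos.2 (one_lt_exp_mul ha hP)).ne'
  simp only [sigmoidLogSlope]
  field_simp
  ring

lemma antitoneOn_sigmoidLogSlope (ha : 0 < a) : AntitoneOn (sigmoidLogSlope a b) (Set.Ioi 0) := by
  intro x hx y _ hxy
  have := sub_pos.2 (one_lt_exp_mul ha hx)
  unfold sigmoidLogSlope
  gcongr

lemma concaveOn_log_sigmoidUtility (ha : 0 < a) :
    ConcaveOn ℝ (Set.Ioi 0) (fun P => log (sigmoidUtility a b P)) := by
  have hd (P : ℝ) (hP : P ∈ Set.Ioi 0) := hasDerivAt_log_sigmoidUtility (b := b) ha hP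
  refine AntitoneOn.concaveOn_of_deriv (convex_Ioi 0)
    (fun P hP => (hd P hP).continuousAt.continuousWithinAt)
    (by rw [interior_Ioi]; exact fun P hP => (hd P hP).differentiableAt.differentiableWithinAt) ?_
  rw [interior_Ioi]
  exact (antitoneOn_sigmoidLogSlope ha).congr fun P hP => (hd P hP).deriv.symm

end

theorem maximizer_iff_shadow_price_general
    (M : ℕ) (hM : 1 ≤ M)
    (a b c d : Fin M → ℝ)
    (ha : ∀ i, 0 < a i)
    (hc : ∀ i, c i = (1 + Real.exp (a i * b i)) / Real.exp (a i * b i))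
    (hd : ∀ i, d i = 1 / (1 + Real.exp (a i * b i)))
    (U : Fin M → ℝ → ℝ)
    (hU : ∀ i (P : ℝ), U i P = c i * (1 / (1 + Real.exp (-(a i) * (P - b i))) - d i))
    (PT : ℝ)
    (F : Set (Fin M → ℝ))
    (hF : F = {P : Fin M → ℝ | (∀ i, 0 < P i) ∧ ∑ i, P i ≤ PT})
    (S : Fin M → ℝ → ℝ)
    (hS : ∀ i (P : ℝ), S i P = deriv (fun P => Real.log (U i P)) P)
    (Pstar : Fin M → ℝ) (hpos : ∀ i, 0 < Pstar i) (hsum : ∑ i, Pstar i = PT) :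
    (∀ Q ∈ F, ∑ i, Real.log (U i (Q i)) ≤ ∑ i, Real.log (U i (Pstar i))) ↔
    (∃ p : ℝ, ∀ i, S i (Pstar i) = p) := by
  have hUi : ∀ i, U i = sigmoidUtility (a i) (b i) := fun i =>
    funext fun P => by rw [hU, hc, hd, sigmoidUtility_eq]
  have hderiv : ∀ i, HasDerivAt (fun P => log (U i P)) (sigmoidLogSlope (a i) (b i) (Pstar i))
      (Pstar i) := fun i => hUi i ▸ hasDerivAt_log_sigmoidUtility (ha i) (hpos i)
  simp only [hS, fun i => (hderiv i).deriv]
  subst hF hsum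
  let i₀ : Fin M := ⟨0, hM⟩
  constructor
  · intro hmax
    exact ⟨_, fun i => eq_of_isMaxOn_sum_of_hasDerivAt hderiv hpos (isMaxOn_iff.2 hmax) i i₀⟩
  · rintro ⟨p, hp⟩ Q ⟨hQ, hQsum⟩
    have hp_nonneg : 0 ≤ p := hp i₀ ▸ (sigmoidLogSlope_pos (ha i₀) (hpos i₀)).le
    refine sum_le_sum_of_le_add_mul_sub (f := fun i P => log (U i P)) _ hp_nonneg
      (fun i _ => ?_) hQsum
    rw [hUi i, ← hp i]
    exact (concaveOn_log_sigmoidUtility (ha i)).le_add_mul_sub_of_hasDerivAt (hpos i) (hQ i)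
      (hasDerivAt_log_sigmoidUtility (ha i) (hpos i))

/-- KKT / shadow-price characterization: a point `P*` with `P*_i > 0` for all `i` and
`Σ P*_i = P_T` maximizes `Σ_i log U_i(P_i)` over the feasible set `F` if and only if
there is a shadow price `p` with `S_i(P*_i) = p` for every `i`, where `S_i` is the
derivative of `log U_i`. -/
theorem maximizer_iff_shadow_price
    (M : ℕ) (hM : 1 ≤ M)
    (a b c d : Fin M → ℝ)
    (ha : ∀ i, 0 < a i) (hb : ∀ i, 0 < b i)
    (hc : ∀ i, c i = (1 + Real.exp (a i * b i)) / Real.exp (a i * b i))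
    (hd : ∀ i, d i = 1 / (1 + Real.exp (a i * b i)))
    (U : Fin M → ℝ → ℝ)
    (hU : ∀ i (P : ℝ), U i P = c i * (1 / (1 + Real.exp (-(a i) * (P - b i))) - d i))
    (PT : ℝ) (hPT : 0 < PT)
    (F : Set (Fin M → ℝ))
    (hF : F = {P : Fin M → ℝ | (∀ i, 0 < P i) ∧ ∑ i, P i ≤ PT})
    (S : Fin M → ℝ → ℝ)
    (hS : ∀ i (P : ℝ), S i P = deriv (fun P => Real.log (U i P)) P)
    (Pstar : Fin M → ℝ) (hpos : ∀ i, 0 < Pstar i) (hsum : ∑ i, Pstar i = PT) :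
    (∀ Q ∈ F, ∑ i, Real.log (U i (Q i)) ≤ ∑ i, Real.log (U i (Pstar i))) ↔
    (∃ p : ℝ, ∀ i, S i (Pstar i) = p) :=
  maximizer_iff_shadow_price_general M hM a b c d ha hc hd U hU PT F hF S hS Pstar hpos hsum
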